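/- arXiv:2103.07316 — 2 statements merged into one kernel-verified Lean document; each statement's English description precedes it below -/
import Mathlib

section
/- Let τ_c > 0, let t_0 ≤ t_1 ≤ ... ≤ t_k be real numbers, and let w_0,...,w_k > 0. Define g(t) = Σ_{i=0}^k w_i (t−t_i)·exp(−(t−t_i)/τ_c) for t ∈ ℝ, and set t* = τ_c + ( Σ_{i=0}^k w_i t_i exp(t_i/τ_c) ) / ( Σ_{i=0}^k w_i exp(t_i/τ_c) ). Then g′(t) = 0 if and only if t = t*, g is strictly increasing on (−∞, t*], and g is strictly decreasing on [t*, ∞); in particular t* is the unique global maximizer of g. -/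
open Real Set

/-!
Pulling the factor `exp (t i / τc)` out of each lobe turns the sum into a single function
`(A x - B) exp (-x / τc)` with `A = Σ w i exp (t i / τc) > 0` and `B = Σ w i t i exp (t i / τc)`.
Its derivative is `(A / τc) exp (-x / τc) (t* - x)`: a positive factor times `t* - x`,
so `g` increases strictly up to `t*` and decreases strictly after it.
-/

section PositiveMulSubDeriv

variable {f φ : ℝ → ℝ} {p : ℝ}

theorem deriv_eq_zero_iff_of_hasDerivAt_pos_mul_sub
    (hf : ∀ x, HasDerivAt f (φ x * (p - x)) x) (hφ : ∀ x, 0 < φ x) (x : ℝ) :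
    deriv f x = 0 ↔ x = p := by
  rw [(hf x).deriv, mul_eq_zero, sub_eq_zero, eq_comm (a := p)]
  simp only [(hφ x).ne', false_or]

theorem strictMonoOn_Iic_of_hasDerivAt_pos_mul_sub
    (hf : ∀ x, HasDerivAt f (φ x * (p - x)) x) (hφ : ∀ x, 0 < φ x) :
    StrictMonoOn f (Iic p) := by
  refine strictMonoOn_of_deriv_pos (convex_Iic p)
    (fun x _ => (hf x).continuousAt.continuousWithinAt) fun x hx => ?_
  rw [interior_Iic] at hx
  rw [(hf x).deriv]
  exact mul_pos (hφ x) (sub_pos.mpr hx)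

theorem strictAntiOn_Ici_of_hasDerivAt_pos_mul_sub
    (hf : ∀ x, HasDerivAt f (φ x * (p - x)) x) (hφ : ∀ x, 0 < φ x) :
    StrictAntiOn f (Ici p) := by
  refine strictAntiOn_of_deriv_neg (convex_Ici p)
    (fun x _ => (hf x).continuousAt.continuousWithinAt) fun x hx => ?_
  rw [interior_Ici] at hx
  rw [(hf x).deriv]
  exact mul_neg_of_pos_of_neg (hφ x) (sub_neg.mpr hx)

theorem lt_of_ne_of_hasDerivAt_pos_mul_sub
    (hf : ∀ x, HasDerivAt f (φ x * (p - x)) x) (hφ : ∀ x, 0 < φ x) {x : ℝ} (hx : x ≠ p) :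
    f x < f p := by
  rcases hx.lt_or_gt with h | h
  · exact strictMonoOn_Iic_of_hasDerivAt_pos_mul_sub hf hφ h.le self_mem_Iic h
  · exact strictAntiOn_Ici_of_hasDerivAt_pos_mul_sub hf hφ self_mem_Ici h.le h

end PositiveMulSubDeriv

theorem sum_mul_sub_mul_exp_neg_div {ι : Type*} (s : Finset ι) (w t : ι → ℝ) (τ x : ℝ) :
    ∑ i ∈ s, w i * (x - t i) * exp (-(x - t i) / τ) =
      ((∑ i ∈ s, w i * exp (t i / τ)) * x - ∑ i ∈ s, w i * t i * exp (t i / τ)) *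
        exp (-x / τ) := by
  rw [Finset.sum_mul, ← Finset.sum_sub_distrib, Finset.sum_mul]
  refine Finset.sum_congr rfl fun i _ => ?_
  rw [show -(x - t i) / τ = t i / τ + -x / τ by ring, exp_add]
  ring

theorem hasDerivAt_mul_sub_mul_exp_neg_div {a τ : ℝ} (ha : a ≠ 0) (hτ : τ ≠ 0) (b x : ℝ) :
    HasDerivAt (fun y => (a * y - b) * exp (-y / τ))
      (a / τ * exp (-x / τ) * (τ + b / a - x)) x := by
  have hlin : HasDerivAt (fun y => a * y - b) a x := by
    simpa using ((hasDerivAt_id x).const_mul a).sub_const b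
  have hexp : HasDerivAt (fun y => exp (-y / τ)) (exp (-x / τ) * (-1 / τ)) x := by
    simpa using ((hasDerivAt_id x).neg.div_const τ).exp
  refine (hlin.mul hexp).congr_deriv ?_
  field_simp
  ring

theorem stmt_14_general (τc : ℝ) (hτc : 0 < τc) (k : ℕ) (t w : ℕ → ℝ)
    (hw : ∀ i ≤ k, 0 < w i)
    (g : ℝ → ℝ)
    (hg : ∀ x, g x = ∑ i ∈ Finset.range (k + 1),
      w i * (x - t i) * Real.exp (-(x - t i) / τc))
    (tstar : ℝ)
    (hts : tstar = τc +
      (∑ i ∈ Finset.range (k + 1), w i * t i * Real.exp (t i / τc)) /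
      (∑ i ∈ Finset.range (k + 1), w i * Real.exp (t i / τc))) :
    (∀ x, deriv g x = 0 ↔ x = tstar) ∧
    StrictMonoOn g (Iic tstar) ∧
    StrictAntiOn g (Ici tstar) ∧
    (∀ x, x ≠ tstar → g x < g tstar) := by
  set A := ∑ i ∈ Finset.range (k + 1), w i * exp (t i / τc)
  have hA : 0 < A := Finset.sum_pos
    (fun i hi => mul_pos (hw i (Nat.lt_succ_iff.mp (Finset.mem_range.mp hi))) (exp_pos _))
    ⟨0, Finset.mem_range.mpr k.succ_pos⟩
  have hg' : g = fun x => (A * x - ∑ i ∈ Finset.range (k + 1), w i * t i * exp (t i / τc)) *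
      exp (-x / τc) := funext fun x => (hg x).trans (sum_mul_sub_mul_exp_neg_div _ w t τc x)
  have hd : ∀ x, HasDerivAt g (A / τc * exp (-x / τc) * (tstar - x)) x := by
    rw [hg', hts]
    exact hasDerivAt_mul_sub_mul_exp_neg_div hA.ne' hτc.ne' _
  have hpos : ∀ x, 0 < A / τc * exp (-x / τc) := fun x => by positivity
  exact ⟨deriv_eq_zero_iff_of_hasDerivAt_pos_mul_sub hd hpos,
    strictMonoOn_Iic_of_hasDerivAt_pos_mul_sub hd hpos,
    strictAntiOn_Ici_of_hasDerivAt_pos_mul_sub hd hpos,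
    fun x => lt_of_ne_of_hasDerivAt_pos_mul_sub hd hpos⟩

/-- the superposition of lobes
`g(t) = Σ_{i=0}^k w_i (t - t_i) exp(-(t - t_i)/τc)` with positive weights has
derivative vanishing exactly at
`t* = τc + (Σ w_i t_i e^{t_i/τc}) / (Σ w_i e^{t_i/τc})`; `g` is strictly
increasing on `(-∞, t*]`, strictly decreasing on `[t*, ∞)`, and `t*` is the
unique global maximizer of `g`. -/
theorem stmt_14 (τc : ℝ) (hτc : 0 < τc) (k : ℕ) (t w : ℕ → ℝ)
    (hmono : ∀ i j, i ≤ j → j ≤ k → t i ≤ t j)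
    (hw : ∀ i ≤ k, 0 < w i)
    (g : ℝ → ℝ)
    (hg : ∀ x, g x = ∑ i ∈ Finset.range (k + 1),
      w i * (x - t i) * Real.exp (-(x - t i) / τc))
    (tstar : ℝ)
    (hts : tstar = τc +
      (∑ i ∈ Finset.range (k + 1), w i * t i * Real.exp (t i / τc)) /
      (∑ i ∈ Finset.range (k + 1), w i * Real.exp (t i / τc))) :
    (∀ x, deriv g x = 0 ↔ x = tstar) ∧
    StrictMonoOn g (Iic tstar) ∧
    StrictAntiOn g (Ici tstar) ∧
    (∀ x, x ≠ tstar → g x < g tstar) :=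
  stmt_14_general τc hτc k t w hw g hg tstar hts
end

section
/- Let 0 = t_0 < t_1 < ... < t_n = t_final be a partition, A > 0, and let m_1, m̃_1, m_2, m̃_2 : [0,t_final] → ℝ be integrable with 0 ≤ m_1 ≤ 1, 0 ≤ m̃_1 ≤ 1 and m_2 ≥ 0 continuous. Assume that on each interval [t_j, t_{j+1}] the function m_2 is convex, and that m̃_2 is constant on each [t_j, t_{j+1}) and equal there to the average (1/(t_{j+1}−t_j))·∫_{t_j}^{t_{j+1}} m_2(u) du. Define F(t) = A·∫_0^t exp( −∫_s^t m_2(u) du )·m_1(s) ds and F̃(t) = A·∫_0^t exp( −∫_s^t m̃_2(u) du )·m̃_1(s) ds. Then for every k ∈ {0,...,n}: |F(t_k) − F̃(t_k)| ≤ A·( ∫_0^{t_k} |m_1(s) − m̃_1(s)| ds + t_k·∫_0^{t_k} |m_2(s) − m̃_2(s)| ds ). -/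
open Real Set MeasureTheory intervalIntegral

private lemma exp_lip_aux {a b : ℝ} (ha : 0 ≤ a) (hab : a ≤ b) :
    |Real.exp (-a) - Real.exp (-b)| ≤ |a - b| := by
  have h2 : (a - b) + 1 ≤ Real.exp (a - b) := Real.add_one_le_exp _
  have h3 : Real.exp (-b) = Real.exp (a - b) * Real.exp (-a) := by
    rw [← Real.exp_add]; ring_nf
  have h4 : Real.exp (-a) ≤ 1 := Real.exp_le_one_iff.mpr (by linarith)
  have h5 : Real.exp (-b) ≤ Real.exp (-a) := Real.exp_le_exp.mpr (by linarith)
  have h6 : (0:ℝ) < Real.exp (-a) := Real.exp_pos _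
  rw [abs_of_nonneg (by linarith), abs_of_nonpos (by linarith)]
  nlinarith

private lemma exp_lip {a b : ℝ} (ha : 0 ≤ a) (hb : 0 ≤ b) :
    |Real.exp (-a) - Real.exp (-b)| ≤ |a - b| := by
  rcases le_total a b with h | h
  · exact exp_lip_aux ha h
  · rw [abs_sub_comm, abs_sub_comm a b]; exact exp_lip_aux hb h

private lemma key_bound {a b x y : ℝ} (ha : 0 ≤ a) (hb : 0 ≤ b)
    (hx : x ∈ Icc (0:ℝ) 1) (hy : y ∈ Icc (0:ℝ) 1) :
    |Real.exp (-a) * x - Real.exp (-b) * y| ≤ |x - y| + |a - b| := by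
  have heq : Real.exp (-a) * x - Real.exp (-b) * y =
      Real.exp (-b) * (x - y) + (Real.exp (-a) - Real.exp (-b)) * x := by ring
  have h1 : |Real.exp (-a) - Real.exp (-b)| ≤ |a - b| := exp_lip ha hb
  have hb1 : Real.exp (-b) ≤ 1 := Real.exp_le_one_iff.mpr (by linarith)
  have hb0 : (0:ℝ) ≤ Real.exp (-b) := (Real.exp_pos _).le
  have hxabs : |x| ≤ 1 := abs_le.mpr ⟨by linarith [hx.1], hx.2⟩
  calc |Real.exp (-a) * x - Real.exp (-b) * y|
      ≤ |Real.exp (-b) * (x - y)| + |(Real.exp (-a) - Real.exp (-b)) * x| := by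
        rw [heq]; exact abs_add_le _ _
    _ = Real.exp (-b) * |x - y| + |Real.exp (-a) - Real.exp (-b)| * |x| := by
        rw [abs_mul, abs_mul, abs_of_nonneg hb0]
    _ ≤ 1 * |x - y| + |a - b| * 1 := by
        nlinarith [abs_nonneg (x - y), abs_nonneg (a - b), abs_nonneg x,
          abs_nonneg (Real.exp (-a) - Real.exp (-b))]
    _ = |x - y| + |a - b| := by ring

/-- error estimate: if `m̃₂` is the piecewise-constant interval
average of `m₂` over the partition `(t_j)`, `m₂` is convex on each subinterval,
and `0 ≤ m₁, m̃₁ ≤ 1`, then the forces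
`F(t) = A ∫_0^t exp(-∫_s^t m₂) m₁(s) ds` and
`F̃(t) = A ∫_0^t exp(-∫_s^t m̃₂) m̃₁(s) ds` satisfy, at each node `t_k`,
`|F(t_k) - F̃(t_k)| ≤ A (∫_0^{t_k} |m₁ - m̃₁| + t_k ∫_0^{t_k} |m₂ - m̃₂|)`. -/
theorem stmt_17 (n : ℕ) (tf A : ℝ) (t : ℕ → ℝ) (m1 m1t m2 m2t F Ft : ℝ → ℝ)
    (hA : 0 < A)
    (ht0 : t 0 = 0) (htn : t n = tf)
    (hmono : ∀ i < n, t i < t (i + 1))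
    (hm1b : ∀ s ∈ Icc (0 : ℝ) tf, m1 s ∈ Icc (0 : ℝ) 1)
    (hm1tb : ∀ s ∈ Icc (0 : ℝ) tf, m1t s ∈ Icc (0 : ℝ) 1)
    (hm2c : ContinuousOn m2 (Icc 0 tf))
    (hm2pos : ∀ s ∈ Icc (0 : ℝ) tf, 0 ≤ m2 s)
    (hm1int : IntervalIntegrable m1 volume 0 tf)
    (hm1tint : IntervalIntegrable m1t volume 0 tf)
    (hm2tint : IntervalIntegrable m2t volume 0 tf)
    (hconv : ∀ j < n, ConvexOn ℝ (Icc (t j) (t (j + 1))) m2)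
    (hm2t : ∀ j < n, ∀ s ∈ Ico (t j) (t (j + 1)),
      m2t s = (1 / (t (j + 1) - t j)) * ∫ u in t j..t (j + 1), m2 u)
    (hF : ∀ x, F x = A * ∫ s in (0:ℝ)..x, Real.exp (-(∫ u in s..x, m2 u)) * m1 s)
    (hFt : ∀ x, Ft x = A * ∫ s in (0:ℝ)..x, Real.exp (-(∫ u in s..x, m2t u)) * m1t s) :
    ∀ k ≤ n, |F (t k) - Ft (t k)| ≤
      A * ((∫ s in (0:ℝ)..t k, |m1 s - m1t s|) +
        t k * ∫ s in (0:ℝ)..t k, |m2 s - m2t s|) := by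
  -- monotonicity of the partition
  have hle : ∀ i j : ℕ, i ≤ j → j ≤ n → t i ≤ t j := by
    intro i j hij hjn
    induction j with
    | zero => have : i = 0 := Nat.le_zero.mp hij; simp [this]
    | succ j ih =>
      rcases Nat.lt_or_ge i (j + 1) with h | h
      · exact (ih (Nat.lt_succ_iff.mp h) (le_trans (Nat.le_succ j) hjn)).trans
          (hmono j (by omega)).le
      · have : i = j + 1 := le_antisymm hij h
        simp [this]
  have htf0 : (0:ℝ) ≤ tf := by
    rw [← ht0, ← htn]; exact hle 0 n (Nat.zero_le n) le_rfl
  -- covering of [0, tf) by the subintervals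
  have hcover : ∀ m ≤ n, ∀ u, t 0 ≤ u → u < t m → ∃ j < m, u ∈ Ico (t j) (t (j + 1)) := by
    intro m hm
    induction m with
    | zero => intro u h1 h2; exact absurd (h1.trans_lt h2) (lt_irrefl _)
    | succ m ih =>
      intro u h1 h2
      rcases lt_or_ge u (t m) with h | h
      · obtain ⟨j, hj, hju⟩ := ih (le_trans (Nat.le_succ m) hm) u h1 h
        exact ⟨j, Nat.lt_succ_of_lt hj, hju⟩
      · exact ⟨m, Nat.lt_succ_self m, ⟨h, h2⟩⟩
  -- m2 is interval integrable on [0, tf]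
  have hm2c' : ContinuousOn m2 (uIcc 0 tf) := by rwa [uIcc_of_le htf0]
  have hm2int : IntervalIntegrable m2 volume 0 tf := hm2c'.intervalIntegrable
  -- m2t is nonnegative on [0, tf)
  have hm2tpos : ∀ u, 0 ≤ u → u < tf → 0 ≤ m2t u := by
    intro u hu0 hutf
    obtain ⟨j, hj, hju⟩ := hcover n le_rfl u (by rwa [ht0]) (by rwa [htn])
    rw [hm2t j hj u hju]
    have hjlt : t j < t (j + 1) := hmono j hj
    have hsub : Icc (t j) (t (j + 1)) ⊆ Icc 0 tf := by
      apply Icc_subset_Icc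
      · rw [← ht0]; exact hle 0 j (Nat.zero_le j) (le_of_lt hj)
      · rw [← htn]; exact hle (j + 1) n hj le_rfl
    have hint : (0:ℝ) ≤ ∫ x in t j..t (j + 1), m2 x :=
      intervalIntegral.integral_nonneg hjlt.le (fun x hx => hm2pos x (hsub hx))
    have hpos : (0:ℝ) < t (j + 1) - t j := sub_pos.mpr hjlt
    exact mul_nonneg (by positivity) hint
  intro k hk
  set T := t k with hT
  have hT0 : (0:ℝ) ≤ T := by rw [hT, ← ht0]; exact hle 0 k (Nat.zero_le k) hk
  have hTtf : T ≤ tf := by rw [hT, ← htn]; exact hle k n hk le_rfl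
  have hsubT : uIcc (0:ℝ) T ⊆ uIcc 0 tf := by
    rw [uIcc_of_le hT0, uIcc_of_le htf0]
    exact Icc_subset_Icc le_rfl hTtf
  have hsubsT : ∀ s ∈ Icc (0:ℝ) T, uIcc s T ⊆ uIcc 0 tf := by
    intro s hs
    rw [uIcc_of_le hs.2, uIcc_of_le htf0]
    exact Icc_subset_Icc hs.1 hTtf
  -- the primitives
  set P : ℝ → ℝ := fun s => ∫ u in s..T, m2 u with hP
  set Pt : ℝ → ℝ := fun s => ∫ u in s..T, m2t u with hPt
  have hPc : ContinuousOn P (uIcc 0 T) :=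
    continuousOn_primitive_interval_left
      ((intervalIntegrable_iff_integrableOn_Icc_of_le hT0).mp (hm2int.mono_set hsubT)
        |>.mono_set (by rw [uIcc_of_le hT0]))
  have hPtc : ContinuousOn Pt (uIcc 0 T) :=
    continuousOn_primitive_interval_left
      ((intervalIntegrable_iff_integrableOn_Icc_of_le hT0).mp (hm2tint.mono_set hsubT)
        |>.mono_set (by rw [uIcc_of_le hT0]))
  -- nonnegativity of the primitives on [0, T]
  have hPpos : ∀ s ∈ Icc (0:ℝ) T, 0 ≤ P s := by
    intro s hs
    exact intervalIntegral.integral_nonneg hs.2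
      (fun u hu => hm2pos u ⟨hs.1.trans hu.1, hu.2.trans hTtf⟩)
  have hPtpos : ∀ s ∈ Icc (0:ℝ) T, 0 ≤ Pt s := by
    intro s hs
    apply intervalIntegral.integral_nonneg_of_ae_restrict hs.2
    have hne : ∀ᵐ u : ℝ ∂volume, u ≠ tf := by
      have hset : {u : ℝ | ¬ u ≠ tf} = {tf} := by ext u; simp
      rw [MeasureTheory.ae_iff, hset]
      exact measure_singleton tf
    rw [Filter.EventuallyLE, ae_restrict_iff' measurableSet_Icc]
    filter_upwards [hne] with u hu huIcc
    exact hm2tpos u (hs.1.trans huIcc.1) (lt_of_le_of_ne (huIcc.2.trans hTtf) hu)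
  -- integrands and their integrability
  set g : ℝ → ℝ := fun s => Real.exp (-(P s)) * m1 s with hg
  set gt : ℝ → ℝ := fun s => Real.exp (-(Pt s)) * m1t s with hgt
  have hm1T : IntervalIntegrable m1 volume 0 T := hm1int.mono_set hsubT
  have hm1tT : IntervalIntegrable m1t volume 0 T := hm1tint.mono_set hsubT
  have hgint : IntervalIntegrable g volume 0 T :=
    hm1T.continuousOn_mul (Real.continuous_exp.comp_continuousOn hPc.neg)
  have hgtint : IntervalIntegrable gt volume 0 T :=
    hm1tT.continuousOn_mul (Real.continuous_exp.comp_continuousOn hPtc.neg)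
  have habsm1 : IntervalIntegrable (fun s => |m1 s - m1t s|) volume 0 T :=
    (hm1T.sub hm1tT).abs
  have habsm2 : IntervalIntegrable (fun s => |m2 s - m2t s|) volume 0 tf :=
    (hm2int.sub hm2tint).abs
  set C : ℝ := ∫ s in (0:ℝ)..T, |m2 s - m2t s| with hC
  -- pointwise bound
  have hpoint : ∀ s ∈ Icc (0:ℝ) T, |g s - gt s| ≤ |m1 s - m1t s| + C := by
    intro s hs
    have hsf : s ∈ Icc (0:ℝ) tf := ⟨hs.1, hs.2.trans hTtf⟩
    have h1 : |g s - gt s| ≤ |m1 s - m1t s| + |P s - Pt s| :=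
      key_bound (hPpos s hs) (hPtpos s hs) (hm1b s hsf) (hm1tb s hsf)
    have hm2sT : IntervalIntegrable m2 volume s T := hm2int.mono_set (hsubsT s hs)
    have hm2tsT : IntervalIntegrable m2t volume s T := hm2tint.mono_set (hsubsT s hs)
    have h2 : P s - Pt s = ∫ u in s..T, (m2 u - m2t u) :=
      (intervalIntegral.integral_sub hm2sT hm2tsT).symm
    have h3 : |P s - Pt s| ≤ ∫ u in s..T, |m2 u - m2t u| := by
      rw [h2]
      exact intervalIntegral.abs_integral_le_integral_abs hs.2
    have hsub0s : uIcc (0:ℝ) s ⊆ uIcc 0 tf := by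
      rw [uIcc_of_le hs.1, uIcc_of_le htf0]
      exact Icc_subset_Icc le_rfl (hs.2.trans hTtf)
    have h4 : (∫ u in (0:ℝ)..s, |m2 u - m2t u|) + (∫ u in s..T, |m2 u - m2t u|) = C :=
      intervalIntegral.integral_add_adjacent_intervals
        (habsm2.mono_set hsub0s) (habsm2.mono_set (hsubsT s hs))
    have h5 : (0:ℝ) ≤ ∫ u in (0:ℝ)..s, |m2 u - m2t u| :=
      intervalIntegral.integral_nonneg hs.1 (fun u _ => abs_nonneg _)
    have h6 : (∫ u in s..T, |m2 u - m2t u|) ≤ C := by linarith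
    calc |g s - gt s| ≤ |m1 s - m1t s| + |P s - Pt s| := h1
      _ ≤ |m1 s - m1t s| + C := by linarith
  -- assemble
  have hFeq : F T - Ft T = A * ∫ s in (0:ℝ)..T, (g s - gt s) := by
    rw [hF, hFt, intervalIntegral.integral_sub hgint hgtint]
    ring
  have hstep1 : |F T - Ft T| ≤ A * ∫ s in (0:ℝ)..T, |g s - gt s| := by
    rw [hFeq, abs_mul, abs_of_pos hA]
    exact mul_le_mul_of_nonneg_left
      (intervalIntegral.abs_integral_le_integral_abs hT0) hA.le
  have hstep2 : (∫ s in (0:ℝ)..T, |g s - gt s|) ≤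
      ∫ s in (0:ℝ)..T, (|m1 s - m1t s| + C) :=
    intervalIntegral.integral_mono_on hT0 (hgint.sub hgtint).abs
      (habsm1.add (intervalIntegrable_const)) hpoint
  have hstep3 : (∫ s in (0:ℝ)..T, (|m1 s - m1t s| + C)) =
      (∫ s in (0:ℝ)..T, |m1 s - m1t s|) + T * C := by
    rw [intervalIntegral.integral_add habsm1 intervalIntegrable_const,
      intervalIntegral.integral_const, smul_eq_mul]
    ring
  calc |F T - Ft T| ≤ A * ∫ s in (0:ℝ)..T, |g s - gt s| := hstep1
    _ ≤ A * ((∫ s in (0:ℝ)..T, |m1 s - m1t s|) + T * C) := by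
        rw [← hstep3]
        exact mul_le_mul_of_nonneg_left hstep2 hA.le
end
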